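/- arXiv:2310.04223 — 3 statements merged into one kernel-verified Lean document; each statement's English description precedes it below -/
import Mathlib

section
/- In a median graph, every convex subgraph is gated: if H is a convex induced subgraph (meaning I(u,v) ⊆ V(H) for all u, v ∈ V(H)), then for every vertex x there exists a vertex x' ∈ V(H) such that x' ∈ I(x,y) for every y ∈ V(H). -/
/-
A vertex `g` of `H` nearest to `x` (it exists since distances lie in `ℕ`) is a gate. For
`y ∈ H`, the median `m` of `x, y, g` lies in `I(y, g) ⊆ H` and in `I(g, x)`, so it is at least
as far from `x` as `g` is while lying on a shortest path from `g` to `x`; hence `m = g`, and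
`g = m ∈ I(x, y)`.
-/

/-- The metric interval between `u` and `v` in a graph `G`. -/
def interval {V : Type*} (G : SimpleGraph V) (u v : V) : Set V :=
  {w | G.dist u w + G.dist w v = G.dist u v}

/-- A graph is median if every triple of vertices has a unique median. -/
def MedianGraph {V : Type*} (G : SimpleGraph V) : Prop :=
  ∀ x y z : V, ∃! m : V,
    m ∈ interval G x y ∧ m ∈ interval G y z ∧ m ∈ interval G z x

namespace SimpleGraph

variable {V : Type*} {G : SimpleGraph V}

theorem Connected.eq_of_mem_interval_of_dist_le (hconn : G.Connected) {g m x : V}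
    (hm : m ∈ interval G g x) (hle : G.dist x g ≤ G.dist x m) : m = g := by
  have hsum : G.dist g m + G.dist m x = G.dist g x := hm
  rw [G.dist_comm (u := m), G.dist_comm (u := g) (v := x)] at hsum
  have hgm : G.dist g m = 0 := by omega
  exact (hconn.dist_eq_zero_iff.mp hgm).symm

theorem mem_interval_of_isNearest (hconn : G.Connected) (hmed : MedianGraph G) {H : Set V}
    (hconv : ∀ u ∈ H, ∀ v ∈ H, interval G u v ⊆ H) {x g : V} (hg : g ∈ H)
    (hnearest : ∀ y ∈ H, G.dist x g ≤ G.dist x y) {y : V} (hy : y ∈ H) :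
    g ∈ interval G x y := by
  obtain ⟨m, ⟨hmxy, hmyg, hmgx⟩, -⟩ := hmed x y g
  have hmH : m ∈ H := hconv y hy g hg hmyg
  rwa [← hconn.eq_of_mem_interval_of_dist_le hmgx (hnearest m hmH)]

end SimpleGraph

theorem median_convex_is_gated_general {V : Type*} (G : SimpleGraph V)
    (hconn : G.Connected) (hmed : MedianGraph G)
    (H : Set V) (hne : H.Nonempty)
    (hconv : ∀ u ∈ H, ∀ v ∈ H, interval G u v ⊆ H) :
    ∀ x : V, ∃ g ∈ H, ∀ y ∈ H, g ∈ interval G x y := by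
  intro x
  have hg := Function.argminOn_mem (G.dist x) H hne
  exact ⟨_, hg, fun y hy => G.mem_interval_of_isNearest hconn hmed hconv hg
    (fun z hz => Function.argminOn_le _ H hz) hy⟩

/-- In a median graph, every nonempty convex set of vertices is gated: every vertex `x`
has a gate `g ∈ H` lying on a shortest path from `x` to each vertex of `H`. -/
theorem median_convex_is_gated {V : Type*} [Fintype V] (G : SimpleGraph V)
    (hconn : G.Connected) (hmed : MedianGraph G)
    (H : Set V) (hne : H.Nonempty)
    (hconv : ∀ u ∈ H, ∀ v ∈ H, interval G u v ⊆ H) :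
    ∀ x : V, ∃ g ∈ H, ∀ y ∈ H, g ∈ interval G x y :=
  median_convex_is_gated_general G hconn hmed H hne hconv
end

section
/- In a median graph, every cube subgraph is gated: if C is an induced subgraph of G isomorphic to a hypercube Q_n, then C is gated in G. -/
/-- The hypercube graph `Q_n`: vertices are `Fin n → Bool`, adjacent iff they differ in
exactly one coordinate. -/
def cubeGraph (n : ℕ) : SimpleGraph (Fin n → Bool) :=
  SimpleGraph.fromRel (fun u v => (Finset.univ.filter fun i => u i ≠ v i).card = 1)

open SimpleGraph Function

section Hamming

variable {ι β : Type*} [Fintype ι] [DecidableEq ι] [DecidableEq β]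

theorem hammingDist_update_self_of_ne {x : ι → β} {i : ι} {b : β} (h : x i ≠ b) :
    hammingDist x (update x i b) = 1 := by
  have : (Finset.univ.filter fun j => x j ≠ update x i b j) = {i} := by
    ext j
    by_cases hj : j = i
    · subst hj; simp [h]
    · simp [hj]
  rw [hammingDist, this, Finset.card_singleton]

theorem hammingDist_update_add_one {x y : ι → β} {i : ι} (h : x i ≠ y i) :
    hammingDist x (update y i (x i)) + 1 = hammingDist x y := by
  have : (Finset.univ.filter fun j => x j ≠ update y i (x i) j) =
      (Finset.univ.filter fun j => x j ≠ y j).erase i := by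
    ext j
    by_cases hj : j = i
    · subst hj; simp
    · simp [hj]
  rw [hammingDist, this, Finset.card_erase_add_one (by simpa using h), hammingDist]

end Hamming

theorem cubeGraph_adj_iff {n : ℕ} {p q : Fin n → Bool} :
    (cubeGraph n).Adj p q ↔ hammingDist p q = 1 := by
  rw [cubeGraph, fromRel_adj, ← hammingDist, ← hammingDist, hammingDist_comm q p, or_self,
    and_iff_right_iff_imp]
  intro h
  exact hammingDist_ne_zero.mp (by omega)

theorem cubeGraph_adj_update {n : ℕ} {q : Fin n → Bool} {i : Fin n} {b : Bool}
    (h : q i ≠ b) :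
    (cubeGraph n).Adj q (update q i b) :=
  cubeGraph_adj_iff.mpr (hammingDist_update_self_of_ne h)

theorem mem_interval {V : Type*} {G : SimpleGraph V} {u v w : V} :
    w ∈ interval G u v ↔ G.dist u w + G.dist w v = G.dist u v :=
  Iff.rfl

namespace MedianGraph

variable {V : Type*} {G : SimpleGraph V} (hmed : MedianGraph G)
include hmed

theorem dist_eq_add_one_or (u : V) {v w : V} (hvw : G.Adj v w) :
    G.dist u w = G.dist u v + 1 ∨ G.dist u v = G.dist u w + 1 := by
  obtain ⟨m, ⟨huv, hvw', hwu⟩, -⟩ := hmed u v w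
  simp only [mem_interval, dist_eq_one_iff_adj.mpr hvw] at huv hvw' hwu
  have := G.dist_comm (u := w) (v := u)
  have := G.dist_comm (u := m) (v := u)
  have := G.dist_comm (u := m) (v := v)
  have := G.dist_comm (u := m) (v := w)
  omega

theorem dist_eq_two_of_adj_of_adj {p a b : V} (ha : G.Adj p a) (hb : G.Adj p b) (hab : a ≠ b) :
    G.dist a b = 2 := by
  have hle : G.dist a b ≤ 2 := dist_le (.cons ha.symm (.cons hb .nil))
  have hne0 : G.dist a b ≠ 0 :=
    fun h => hab ((ha.symm.reachable.trans hb.reachable).dist_eq_zero_iff.mp h)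
  have hne1 : G.dist a b ≠ 1 := fun h => by
    have := hmed.dist_eq_add_one_or p (dist_eq_one_iff_adj.mp h)
    rw [dist_eq_one_iff_adj.mpr ha, dist_eq_one_iff_adj.mpr hb] at this
    omega
  omega

theorem eq_or_eq_of_mem_commonNeighbors {p q a b c : V} (hpq : p ≠ q)
    (ha : a ∈ G.commonNeighbors p q) (hb : b ∈ G.commonNeighbors p q)
    (hc : c ∈ G.commonNeighbors p q) (hab : a ≠ b) : c = a ∨ c = b := by
  rw [mem_commonNeighbors] at ha hb hc
  by_contra! hca
  have isMedian : ∀ r, G.Adj r a → G.Adj r b → G.Adj r c →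
      r ∈ interval G a b ∧ r ∈ interval G b c ∧ r ∈ interval G c a := fun r ra rb rc => by
    simp [mem_interval, dist_eq_one_iff_adj.mpr ra.symm,
      dist_eq_one_iff_adj.mpr rb.symm, dist_eq_one_iff_adj.mpr rc.symm,
      dist_eq_one_iff_adj.mpr ra, dist_eq_one_iff_adj.mpr rb, dist_eq_one_iff_adj.mpr rc,
      hmed.dist_eq_two_of_adj_of_adj ra rb hab, hmed.dist_eq_two_of_adj_of_adj rb rc hca.2.symm,
      hmed.dist_eq_two_of_adj_of_adj rc ra hca.1]
  exact hpq ((hmed a b c).unique (isMedian p ha.1 hb.1 hc.1) (isMedian q ha.2 hb.2 hc.2))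

theorem quadrangle {u v w : V} (huvw : G.dist u v = G.dist u w) (hvw : G.dist v w = 2) :
    ∃ z, G.Adj v z ∧ G.Adj w z ∧ G.dist u z + 1 = G.dist u v := by
  obtain ⟨m, ⟨huv, hvw', hwu⟩, -⟩ := hmed u v w
  simp only [mem_interval] at huv hvw' hwu
  have := G.dist_comm (u := w) (v := u)
  have := G.dist_comm (u := m) (v := u)
  have := G.dist_comm (u := m) (v := w)
  have := G.dist_comm (u := m) (v := v)
  exact ⟨m, dist_eq_one_iff_adj.mp (by omega), dist_eq_one_iff_adj.mp (by omega), by omega⟩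

theorem dist_ne_of_square {x a b c d : V} (hab : G.Adj a b) (hbc : G.Adj b c)
    (hcd : G.Adj c d) (hda : G.Adj d a) (hac : a ≠ c) (hbd : b ≠ d)
    (hb : G.dist x b = G.dist x a + 1) (hd : G.dist x d = G.dist x a + 1) :
    G.dist x c ≠ G.dist x a := by
  intro hc
  obtain ⟨z, haz, hcz, hz⟩ :=
    hmed.quadrangle hc.symm (hmed.dist_eq_two_of_adj_of_adj hab.symm hbc hac)
  rcases hmed.eq_or_eq_of_mem_commonNeighbors hac (G.mem_commonNeighbors.mpr ⟨hab, hbc.symm⟩)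
    (G.mem_commonNeighbors.mpr ⟨hda.symm, hcd⟩) (G.mem_commonNeighbors.mpr ⟨haz, hcz⟩) hbd
    with rfl | rfl <;> omega

section CubeEmbedding

variable {n : ℕ} (f : cubeGraph n ↪g G)

theorem dist_map_update_update_ne {x : V} {q : Fin n → Bool} {i j : Fin n} {b c : Bool}
    (hij : i ≠ j) (hb : q i ≠ b) (hc : q j ≠ c)
    (hdi : G.dist x (f (update q i b)) = G.dist x (f q) + 1)
    (hdj : G.dist x (f (update q j c)) = G.dist x (f q) + 1) :
    G.dist x (f (update (update q i b) j c)) ≠ G.dist x (f q) := by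
  have hc' : update q i b j ≠ c := by rwa [update_of_ne hij.symm]
  have hb' : update q j c i ≠ b := by rwa [update_of_ne hij]
  refine (hmed.dist_ne_of_square (f.map_adj_iff.mpr (cubeGraph_adj_update hb))
    (f.map_adj_iff.mpr (cubeGraph_adj_update hc'))
    (update_comm hij.symm c b q ▸ f.map_adj_iff.mpr (cubeGraph_adj_update hb')).symm
    (f.map_adj_iff.mpr (cubeGraph_adj_update hc)).symm
    (f.injective.ne fun h => hb ?_) (f.injective.ne fun h => hb' ?_) hdi hdj)
  · simpa [hij] using congrFun h i
  · simpa using (congrFun h i).symm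

theorem dist_map_eq_add_hammingDist {x : V} {g : Fin n → Bool}
    (hg : ∀ r, G.dist x (f g) ≤ G.dist x (f r)) (q : Fin n → Bool) :
    G.dist x (f q) = G.dist x (f g) + hammingDist g q := by
  induction hm : hammingDist g q using Nat.strong_induction_on generalizing q with
  | _ m ih =>
  rcases Nat.eq_zero_or_pos m with rfl | hpos
  · rw [hammingDist_eq_zero.mp hm, add_zero]
  obtain ⟨i, hi⟩ := Function.ne_iff.mp
    (hammingDist_ne_zero.mp (by omega : hammingDist g q ≠ 0))
  have hmi : hammingDist g (update q i (g i)) + 1 = m := hm ▸ hammingDist_update_add_one hi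
  have hdi := ih _ (by omega) (update q i (g i)) rfl
  rcases hmed.dist_eq_add_one_or x (f.map_adj_iff.mpr (cubeGraph_adj_update hi.symm))
    with hfar | hnear
  · have := hg q
    obtain ⟨j, hj⟩ := Function.ne_iff.mp
      (hammingDist_ne_zero.mp (by omega : hammingDist g (update q i (g i)) ≠ 0))
    have hji : j ≠ i := by rintro rfl; simp at hj
    have hqj : g j ≠ q j := by rwa [← update_of_ne hji (g i) q]
    have hmj := hammingDist_update_add_one hqj
    have hmij := hammingDist_update_add_one hj
    have hdj := ih _ (by omega) (update q j (g j)) rfl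
    have hdij := ih _ (by omega) (update (update q i (g i)) j (g j)) rfl
    exact absurd (by omega)
      (hmed.dist_map_update_update_ne f hji.symm hi.symm hqj.symm hfar (by omega))
  · omega

theorem dist_map_eq_hammingDist (p q : Fin n → Bool) :
    G.dist (f p) (f q) = hammingDist p q := by
  simpa using hmed.dist_map_eq_add_hammingDist f (x := f p) (g := p) (fun r => by simp) q

end CubeEmbedding

end MedianGraph

theorem median_cubes_gated_general {V : Type*} (G : SimpleGraph V)
    (hmed : MedianGraph G)
    (C : Set V) (hcube : ∃ n : ℕ, Nonempty (G.induce C ≃g cubeGraph n)) :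
    ∀ x : V, ∃ g ∈ C, ∀ y ∈ C, g ∈ interval G x y := by
  obtain ⟨n, ⟨φ⟩⟩ := hcube
  let f : cubeGraph n ↪g G := (Embedding.induce C).comp φ.symm.toEmbedding
  intro x
  obtain ⟨g, hg⟩ : ∃ g, ∀ r, G.dist x (f g) ≤ G.dist x (f r) :=
    ⟨_, fun r => argmin_le (fun r => G.dist x (f r)) r⟩
  refine ⟨f g, (φ.symm g).2, fun y hy => ?_⟩
  obtain ⟨q, rfl⟩ : ∃ q, f q = y := ⟨φ ⟨y, hy⟩, by simp [f]⟩
  rw [mem_interval, hmed.dist_map_eq_hammingDist]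
  exact (hmed.dist_map_eq_add_hammingDist f hg q).symm

/-- In a median graph, every induced subgraph isomorphic to a hypercube is gated. -/
theorem median_cubes_gated {V : Type*} [Fintype V] (G : SimpleGraph V)
    (hconn : G.Connected) (hmed : MedianGraph G)
    (C : Set V) (hcube : ∃ n : ℕ, Nonempty (G.induce C ≃g cubeGraph n)) :
    ∀ x : V, ∃ g ∈ C, ∀ y ∈ C, g ∈ interval G x y :=
  median_cubes_gated_general G hmed C hcube
end

section
/- Each level graph of a monotone ordering of a median graph is isometric: if v₁ = z, …, v_n orders V(G) by nondecreasing distance to z in a finite median graph G, then each induced subgraph G_i = G[{v₁,…,v_i}] is an isometric subgraph of G (distances in G_i equal distances in G). -/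
/-!
In a median graph, let `m` be the median of `a`, `b` and the base point `z`. If `m` differs
from both `a` and `b`, it is strictly closer to `z` than `a` and splits a geodesic from `a` to
`b` into two shorter ones. If `m = a`, then `a` lies on a geodesic from `b` to `z`, so the first
step from `b` towards `a` moves strictly closer to `z`; symmetrically if `m = b`. Hence any set of
vertices that contains, with each vertex, every vertex strictly closer to `z` carries a geodesic
between any two of its vertices, and the level sets of a monotone ordering are such sets.
-/

open SimpleGraph

namespace SimpleGraph

variable {V : Type*} {G : SimpleGraph V}

lemma exists_adj_dist_eq_of_dist_eq_add_one {u v : V} {k : ℕ} (h : G.dist u v = k + 1) :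
    ∃ w, G.Adj u w ∧ G.dist w v = k := by
  have hr : G.Reachable u v := Reachable.of_dist_ne_zero (by omega)
  obtain ⟨p, hp⟩ := hr.exists_walk_length_eq_dist
  cases p with
  | nil => simp only [Walk.length_nil] at hp; omega
  | @cons _ w _ hadj q =>
    have hq : q.length = k := by rw [Walk.length_cons] at hp; omega
    refine ⟨w, hadj, le_antisymm (hq ▸ dist_le q) ?_⟩
    have := hadj.reachable.dist_triangle_left v
    rw [dist_eq_one_iff_adj.mpr hadj] at this
    omega

lemma dist_le_induce_dist {S : Set V} {a b : S} (h : (G.induce S).Reachable a b) :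
    G.dist a b ≤ (G.induce S).dist a b := by
  obtain ⟨p, hp⟩ := h.exists_walk_length_eq_dist
  calc G.dist a b ≤ (p.map (Embedding.induce S).toHom).length := dist_le _
    _ = (G.induce S).dist a b := by rw [Walk.length_map, hp]

end SimpleGraph

lemma mem_interval_comm {V : Type*} {G : SimpleGraph V} {u v w : V} :
    w ∈ interval G u v ↔ w ∈ interval G v u := by
  simp only [interval, Set.mem_ofPred_eq, SimpleGraph.dist_comm, add_comm]

def IsDistLowerSet {V : Type*} (G : SimpleGraph V) (z : V) (S : Set V) : Prop :=
  ∀ ⦃w⦄, w ∈ S → ∀ ⦃u⦄, G.dist z u < G.dist z w → u ∈ S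

lemma isDistLowerSet_image_Iic {V ι : Type*} [LinearOrder ι] {G : SimpleGraph V} {z : V}
    {v : ι → V} (hv : Function.Surjective v) (hmono : Monotone fun i ↦ G.dist z (v i)) (i : ι) :
    IsDistLowerSet G z (v '' Set.Iic i) := by
  rintro _ ⟨j, hji, rfl⟩ u hu
  obtain ⟨k, rfl⟩ := hv u
  exact ⟨k, le_trans (le_of_not_ge fun hjk ↦ (hmono hjk).not_gt hu) hji, rfl⟩

namespace IsDistLowerSet

variable {V : Type*} {G : SimpleGraph V} {z : V} {S : Set V}

lemma exists_adj_mem_of_mem_interval (hconn : G.Connected) (hS : IsDistLowerSet G z S)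
    {a b : V} {k : ℕ} (ha : a ∈ interval G b z) (hb : b ∈ S) (hab : G.dist b a = k + 1) :
    ∃ b', G.Adj b b' ∧ b' ∈ S ∧ G.dist b' a = k := by
  obtain ⟨b', hadj, hb'a⟩ := exists_adj_dist_eq_of_dist_eq_add_one hab
  refine ⟨b', hadj, hS hb ?_, hb'a⟩
  have hzb' : G.dist z b' ≤ G.dist z a + G.dist a b' := hconn.dist_triangle
  simp only [interval, Set.mem_ofPred_eq] at ha
  have := G.dist_comm (u := a) (v := b')
  have := G.dist_comm (u := z) (v := a)
  have := G.dist_comm (u := z) (v := b)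
  omega

theorem exists_walk_induce_length_eq_dist (hconn : G.Connected) (hmed : MedianGraph G)
    (hS : IsDistLowerSet G z S) {a b : V} (ha : a ∈ S) (hb : b ∈ S) :
    ∃ p : (G.induce S).Walk ⟨a, ha⟩ ⟨b, hb⟩, p.length = G.dist a b := by
  induction hk : G.dist a b using Nat.strong_induction_on generalizing a b with
  | _ k ih =>
  rcases k with _ | k
  · obtain rfl := hconn.dist_eq_zero_iff.mp hk
    exact ⟨.nil, rfl⟩
  obtain ⟨m, ⟨hm_ab, hm_bz, hm_za⟩, -⟩ := hmed a b z
  by_cases hma : m = a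
  · subst hma
    obtain ⟨b', hadj, hb', hb'a⟩ :=
      hS.exists_adj_mem_of_mem_interval hconn hm_bz hb (SimpleGraph.dist_comm.trans hk)
    obtain ⟨p, hp⟩ := ih k k.lt_succ_self ha hb' (SimpleGraph.dist_comm.trans hb'a)
    exact ⟨p.concat (induce_adj.mpr hadj.symm), by rw [Walk.length_concat, hp]⟩
  by_cases hmb : m = b
  · subst hmb
    obtain ⟨a', hadj, ha', ha'b⟩ :=
      hS.exists_adj_mem_of_mem_interval hconn (mem_interval_comm.mp hm_za) ha hk
    obtain ⟨p, hp⟩ := ih k k.lt_succ_self ha' hb ha'b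
    exact ⟨.cons (induce_adj.mpr hadj) p, by rw [Walk.length_cons, hp]⟩
  simp only [interval, Set.mem_ofPred_eq] at hm_ab hm_za
  have hdam : G.dist a m ≠ 0 := fun h ↦ hma (hconn.dist_eq_zero_iff.mp h).symm
  have hdmb : G.dist m b ≠ 0 := fun h ↦ hmb (hconn.dist_eq_zero_iff.mp h)
  have hm : m ∈ S := hS ha (by rw [SimpleGraph.dist_comm (u := m)] at hm_za; omega)
  obtain ⟨p, hp⟩ := ih _ (by omega) ha hm rfl
  obtain ⟨q, hq⟩ := ih _ (by omega) hm hb rfl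
  exact ⟨p.append q, by rw [Walk.length_append, hp, hq, hm_ab, hk]⟩

theorem induce_dist_eq (hconn : G.Connected) (hmed : MedianGraph G)
    (hS : IsDistLowerSet G z S) (a b : S) : (G.induce S).dist a b = G.dist a b := by
  obtain ⟨p, hp⟩ := hS.exists_walk_induce_length_eq_dist hconn hmed a.2 b.2
  exact le_antisymm (hp ▸ dist_le p) (dist_le_induce_dist ⟨p⟩)

end IsDistLowerSet

theorem median_level_graphs_isometric_general {V : Type*} (G : SimpleGraph V)
    (hconn : G.Connected) (hmed : MedianGraph G)
    (z : V) (n : ℕ) (v : Fin n ≃ V)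
    (hmono : ∀ i j : Fin n, i ≤ j → G.dist z (v i) ≤ G.dist z (v j)) :
    ∀ i : Fin n, ∀ a b : ((↑v : Fin n → V) '' {j | j ≤ i} : Set V),
      (G.induce ((↑v : Fin n → V) '' {j | j ≤ i})).dist a b = G.dist ↑a ↑b := fun i ↦
  (isDistLowerSet_image_Iic v.surjective (fun i j hij ↦ hmono i j hij) i).induce_dist_eq hconn hmed

/-- For an ordering `v₁ = z, …, vₙ` of a finite median graph by nondecreasing distance
to `z`, each level graph `Gᵢ = G[{v₁,…,vᵢ}]` is an isometric subgraph of `G`. -/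
theorem median_level_graphs_isometric {V : Type*} [Fintype V] (G : SimpleGraph V)
    (hconn : G.Connected) (hmed : MedianGraph G)
    (z : V) (n : ℕ) (hn : 0 < n) (v : Fin n ≃ V)
    (h0 : v ⟨0, hn⟩ = z)
    (hmono : ∀ i j : Fin n, i ≤ j → G.dist z (v i) ≤ G.dist z (v j)) :
    ∀ i : Fin n, ∀ a b : ((↑v : Fin n → V) '' {j | j ≤ i} : Set V),
      (G.induce ((↑v : Fin n → V) '' {j | j ≤ i})).dist a b = G.dist ↑a ↑b :=
  median_level_graphs_isometric_general G hconn hmed z n v hmono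
end
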